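/- A centred permutation π° has either exactly one minimal non-trivial centred interval, or exactly two minimal non-trivial centred intervals; in the latter case each of the two intervals consists (besides the origin) of points lying in a single quadrant, and the two intervals occupy opposite quadrants. -/

import Mathlib

/-- A *centred permutation*: `vals` is the one-line notation of the filled-in
permutation (length `n+1`), `origin` the index of the origin point. -/
structure CPerm where
  vals : List ℕ
  origin : ℕ
deriving DecidableEq

namespace CPerm

/-- Length of a centred permutation (origin does not count). -/
def len (p : CPerm) : ℕ := p.vals.length - 1

/-- A genuine centred permutation: one-line notation is a permutation of
`{0, …, N-1}` and the origin index is in range. -/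
def IsValid (p : CPerm) : Prop :=
  p.vals ≠ [] ∧ p.origin < p.vals.length ∧ p.vals.Perm (List.range p.vals.length)

def valAt (p : CPerm) (i : ℕ) : ℕ := p.vals.getD i 0

def originVal (p : CPerm) : ℕ := p.valAt p.origin

/-- The box-sum `p ⊞ q`: inflate the origin of `q` by a copy of `p`. -/
def boxSum (p q : CPerm) : CPerm :=
  let N := p.vals.length
  let v := q.originVal
  let shift : ℕ → ℕ := fun u => if u < v then u else u + (N - 1)
  ⟨(q.vals.take q.origin).map shift ++ p.vals.map (· + v) ++
      (q.vals.drop (q.origin + 1)).map shift,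
    q.origin + p.origin⟩

/-- The trivial centred permutation (origin only, length 0). -/
def trivial : CPerm := ⟨[0], 0⟩

/-- Iterated box-sum `σ₁ ⊞ σ₂ ⊞ ⋯ ⊞ σₙ`. -/
def boxSumList (l : List CPerm) : CPerm := l.foldr boxSum trivial

/-- `p` is ⊞-indecomposable: nonempty and not a box-sum of two strictly smaller
centred permutations. -/
def BoxIndecomposable (p : CPerm) : Prop :=
  1 ≤ p.len ∧
    ¬∃ a b : CPerm, a.IsValid ∧ b.IsValid ∧ 1 ≤ a.len ∧ 1 ≤ b.len ∧ boxSum a b = p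

/-- The non-origin point at index `i` of `p` lies in quadrant `q` (1–4,
numbered anticlockwise). -/
def InQuadrant (p : CPerm) (q : ℕ) (i : ℕ) : Prop :=
  i < p.vals.length ∧ i ≠ p.origin ∧
    ((q = 1 ∧ p.origin < i ∧ p.originVal < p.valAt i) ∨
     (q = 2 ∧ i < p.origin ∧ p.originVal < p.valAt i) ∨
     (q = 3 ∧ i < p.origin ∧ p.valAt i < p.originVal) ∨
     (q = 4 ∧ p.origin < i ∧ p.valAt i < p.originVal))

/-- All non-origin points of `p` lie in quadrant `q`. -/
def OneQuadrant (p : CPerm) (q : ℕ) : Prop :=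
  ∀ i, i < p.vals.length → i ≠ p.origin → InQuadrant p q i

def OppositeQuadrants (q₁ q₂ : ℕ) : Prop :=
  (q₁ = 1 ∧ q₂ = 3) ∨ (q₁ = 3 ∧ q₂ = 1) ∨ (q₁ = 2 ∧ q₂ = 4) ∨ (q₁ = 4 ∧ q₂ = 2)

/-- Centred pattern containment `p ≤ q` (origins must match up). -/
def PatternLE (p q : CPerm) : Prop :=
  ∃ f : ℕ → ℕ,
    (∀ i j, i < p.vals.length → j < p.vals.length → i < j → f i < f j) ∧
    (∀ i, i < p.vals.length → f i < q.vals.length) ∧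
    f p.origin = q.origin ∧
    (∀ i j, i < p.vals.length → j < p.vals.length →
      (p.valAt i < p.valAt j ↔ q.valAt (f i) < q.valAt (f j)))

/-- A centred permutation class: nonempty, consisting of valid centred
permutations, and downward closed under centred containment. -/
def IsClass (S : Set CPerm) : Prop :=
  S.Nonempty ∧ (∀ p ∈ S, p.IsValid) ∧
    ∀ p q : CPerm, q ∈ S → p.IsValid → PatternLE p q → p ∈ S

/-- `S` is closed under the box-sum. -/
def BoxClosed (S : Set CPerm) : Prop := ∀ p ∈ S, ∀ q ∈ S, boxSum p q ∈ S

/-- Number of centred permutations of length `n` in `S`. -/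
noncomputable def count (S : Set CPerm) (n : ℕ) : ℕ := {p | p ∈ S ∧ p.len = n}.ncard

/-- The single-point centred permutation in quadrant `q`. -/
def mu : ℕ → CPerm
  | 1 => ⟨[0, 1], 0⟩
  | 2 => ⟨[1, 0], 1⟩
  | 3 => ⟨[0, 1], 1⟩
  | 4 => ⟨[1, 0], 0⟩
  | _ => ⟨[0], 0⟩

def AdjacentQuadrants (a b : ℕ) : Prop :=
  (a, b) = (1, 2) ∨ (a, b) = (2, 3) ∨ (a, b) = (3, 4) ∨ (a, b) = (4, 1) ∨
  (a, b) = (2, 1) ∨ (a, b) = (3, 2) ∨ (a, b) = (4, 3) ∨ (a, b) = (1, 4)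

/-- The adjacency condition on a centred class. -/
def AdjacencyCondition (S : Set CPerm) : Prop :=
  (∃! q : ℕ, q ∈ ({1, 2, 3, 4} : Set ℕ) ∧ mu q ∈ S) ∨
    ∃ a b : ℕ, AdjacentQuadrants a b ∧ mu a ∈ S ∧ mu b ∈ S

end CPerm

namespace CPerm

/-- A centred interval (`∘`-interval) of `p`: a set of indices containing the
origin, contiguous in positions and contiguous in values. -/
def IsCentredInterval (p : CPerm) (I : Finset ℕ) : Prop :=
  p.origin ∈ I ∧ (∀ i ∈ I, i < p.vals.length) ∧
    (∀ i j k : ℕ, i ∈ I → k ∈ I → i ≤ j → j ≤ k → j ∈ I) ∧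
    (∀ i k : ℕ, i ∈ I → k ∈ I → ∀ j, j < p.vals.length →
      p.valAt i ≤ p.valAt j → p.valAt j ≤ p.valAt k → j ∈ I)

/-- A non-trivial centred interval contains a point besides the origin. -/
def NonTrivialCI (p : CPerm) (I : Finset ℕ) : Prop :=
  IsCentredInterval p I ∧ ∃ i ∈ I, i ≠ p.origin

/-- A minimal non-trivial centred interval. -/
def MinimalCI (p : CPerm) (I : Finset ℕ) : Prop :=
  NonTrivialCI p I ∧ ∀ J : Finset ℕ, NonTrivialCI p J → J ⊆ I → J = I

end CPerm

namespace CPerm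

variable {p : CPerm}

private lemma vals_nodup' (hp : p.IsValid) : p.vals.Nodup :=
  hp.2.2.nodup_iff.mpr List.nodup_range

private lemma valAt_lt' (hp : p.IsValid) {i : ℕ} (hi : i < p.vals.length) :
    p.valAt i < p.vals.length := by
  have h1 : p.valAt i = p.vals[i] := List.getD_eq_getElem _ _ hi
  have h2 : p.vals[i] ∈ p.vals := List.getElem_mem hi
  have h3 : p.vals[i] ∈ List.range p.vals.length := hp.2.2.mem_iff.mp h2
  rw [h1]; exact List.mem_range.mp h3

private lemma valAt_inj' (hp : p.IsValid) {i j : ℕ} (hi : i < p.vals.length)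
    (hj : j < p.vals.length) (h : p.valAt i = p.valAt j) : i = j := by
  have h1 : p.valAt i = p.vals[i] := List.getD_eq_getElem _ _ hi
  have h2 : p.valAt j = p.vals[j] := List.getD_eq_getElem _ _ hj
  rw [h1, h2] at h
  exact (List.Nodup.getElem_inj_iff (vals_nodup' hp)).mp h

private lemma valAt_surj' (hp : p.IsValid) {u : ℕ} (hu : u < p.vals.length) :
    ∃ m, m < p.vals.length ∧ p.valAt m = u := by
  have hm : u ∈ p.vals := hp.2.2.symm.mem_iff.mp (List.mem_range.mpr hu)
  obtain ⟨m, hml, he⟩ := List.getElem_of_mem hm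
  exact ⟨m, hml, by rw [valAt, List.getD_eq_getElem _ _ hml, he]⟩

private lemma inter_CI {I J : Finset ℕ} (hI : IsCentredInterval p I)
    (hJ : IsCentredInterval p J) : IsCentredInterval p (I ∩ J) := by
  obtain ⟨hIo, hIb, hIp, hIv⟩ := hI
  obtain ⟨hJo, hJb, hJp, hJv⟩ := hJ
  refine ⟨Finset.mem_inter.mpr ⟨hIo, hJo⟩,
    fun i hi => hIb i (Finset.mem_inter.mp hi).1,
    fun i j k hi hk h1 h2 => Finset.mem_inter.mpr
      ⟨hIp i j k (Finset.mem_inter.mp hi).1 (Finset.mem_inter.mp hk).1 h1 h2,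
       hJp i j k (Finset.mem_inter.mp hi).2 (Finset.mem_inter.mp hk).2 h1 h2⟩,
    fun i k hi hk j hj h1 h2 => Finset.mem_inter.mpr
      ⟨hIv i k (Finset.mem_inter.mp hi).1 (Finset.mem_inter.mp hk).1 j hj h1 h2,
       hJv i k (Finset.mem_inter.mp hi).2 (Finset.mem_inter.mp hk).2 j hj h1 h2⟩⟩

/-- Two distinct minimal centred intervals meet only in the origin. -/
private lemma min_inter {I J : Finset ℕ} (hI : MinimalCI p I) (hJ : MinimalCI p J)
    (hne : I ≠ J) {x : ℕ} (hxI : x ∈ I) (hxJ : x ∈ J) : x = p.origin := by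
  by_contra hx
  have hCI : IsCentredInterval p (I ∩ J) := inter_CI hI.1.1 hJ.1.1
  have hNT : NonTrivialCI p (I ∩ J) := ⟨hCI, x, Finset.mem_inter.mpr ⟨hxI, hxJ⟩, hx⟩
  have e1 := hI.2 _ hNT Finset.inter_subset_left
  have e2 := hJ.2 _ hNT Finset.inter_subset_right
  exact hne (e1.symm.trans e2)

private lemma not_both_right {I J : Finset ℕ} (hI : MinimalCI p I) (hJ : MinimalCI p J)
    (hne : I ≠ J) {i j : ℕ} (hiI : i ∈ I) (hjJ : j ∈ J)
    (hi : p.origin < i) (hj : p.origin < j) : False := by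
  have h1 : p.origin + 1 ∈ I :=
    hI.1.1.2.2.1 p.origin (p.origin + 1) i hI.1.1.1 hiI (by omega) (by omega)
  have h2 : p.origin + 1 ∈ J :=
    hJ.1.1.2.2.1 p.origin (p.origin + 1) j hJ.1.1.1 hjJ (by omega) (by omega)
  have := min_inter hI hJ hne h1 h2
  omega

private lemma not_both_left {I J : Finset ℕ} (hI : MinimalCI p I) (hJ : MinimalCI p J)
    (hne : I ≠ J) {i j : ℕ} (hiI : i ∈ I) (hjJ : j ∈ J)
    (hi : i < p.origin) (hj : j < p.origin) : False := by
  have h1 : p.origin - 1 ∈ I :=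
    hI.1.1.2.2.1 i (p.origin - 1) p.origin hiI hI.1.1.1 (by omega) (by omega)
  have h2 : p.origin - 1 ∈ J :=
    hJ.1.1.2.2.1 j (p.origin - 1) p.origin hjJ hJ.1.1.1 (by omega) (by omega)
  have := min_inter hI hJ hne h1 h2
  omega

private lemma not_both_up (hp : p.IsValid) {I J : Finset ℕ} (hI : MinimalCI p I)
    (hJ : MinimalCI p J) (hne : I ≠ J) {i j : ℕ} (hiI : i ∈ I) (hjJ : j ∈ J)
    (hi : p.originVal < p.valAt i) (hj : p.originVal < p.valAt j) : False := by
  have hiN : i < p.vals.length := hI.1.1.2.1 i hiI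
  have hvN : p.valAt i < p.vals.length := valAt_lt' hp hiN
  have hov : p.originVal = p.valAt p.origin := rfl
  have hu : p.originVal + 1 < p.vals.length := by omega
  obtain ⟨m, hm, hvm⟩ := valAt_surj' hp hu
  have h1 : m ∈ I := hI.1.1.2.2.2 p.origin i hI.1.1.1 hiI m hm (by omega) (by omega)
  have h2 : m ∈ J := hJ.1.1.2.2.2 p.origin j hJ.1.1.1 hjJ m hm (by omega) (by omega)
  have heq := min_inter hI hJ hne h1 h2
  rw [heq] at hvm
  omega

private lemma not_both_down (hp : p.IsValid) {I J : Finset ℕ} (hI : MinimalCI p I)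
    (hJ : MinimalCI p J) (hne : I ≠ J) {i j : ℕ} (hiI : i ∈ I) (hjJ : j ∈ J)
    (hi : p.valAt i < p.originVal) (hj : p.valAt j < p.originVal) : False := by
  have hov : p.originVal = p.valAt p.origin := rfl
  have hoN : p.originVal < p.vals.length := valAt_lt' hp hp.2.1
  have hu : p.originVal - 1 < p.vals.length := by omega
  obtain ⟨m, hm, hvm⟩ := valAt_surj' hp hu
  have h1 : m ∈ I := hI.1.1.2.2.2 i p.origin hiI hI.1.1.1 m hm (by omega) (by omega)
  have h2 : m ∈ J := hJ.1.1.2.2.2 j p.origin hjJ hJ.1.1.1 m hm (by omega) (by omega)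
  have heq := min_inter hI hJ hne h1 h2
  rw [heq] at hvm
  omega

/-- Side transfer lemmas: a point of a minimal interval lies on the side
opposite to that of a point of a different minimal interval. -/
private lemma pos_opp_of_gt {A B : Finset ℕ} (hA : MinimalCI p A) (hB : MinimalCI p B)
    (hne : A ≠ B) {b : ℕ} (hb : b ∈ B) (hbpos : p.origin < b)
    {i : ℕ} (hiA : i ∈ A) (hio : i ≠ p.origin) : i < p.origin := by
  rcases Nat.lt_or_ge i p.origin with h | h
  · exact h
  · exact absurd (not_both_right hA hB hne hiA hb (by omega) hbpos) id

private lemma pos_opp_of_lt {A B : Finset ℕ} (hA : MinimalCI p A) (hB : MinimalCI p B)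
    (hne : A ≠ B) {b : ℕ} (hb : b ∈ B) (hbpos : b < p.origin)
    {i : ℕ} (hiA : i ∈ A) (hio : i ≠ p.origin) : p.origin < i := by
  rcases Nat.lt_or_ge p.origin i with h | h
  · exact h
  · exact absurd (not_both_left hA hB hne hiA hb (by omega) hbpos) id

private lemma val_opp_of_gt (hp : p.IsValid) {A B : Finset ℕ} (hA : MinimalCI p A)
    (hB : MinimalCI p B) (hne : A ≠ B) {b : ℕ} (hb : b ∈ B)
    (hbval : p.originVal < p.valAt b) {i : ℕ} (hiA : i ∈ A) (hio : i ≠ p.origin) :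
    p.valAt i < p.originVal := by
  have hiN : i < p.vals.length := hA.1.1.2.1 i hiA
  have hvne : p.valAt i ≠ p.originVal := fun h => hio (valAt_inj' hp hiN hp.2.1 h)
  rcases Nat.lt_or_ge (p.valAt i) p.originVal with h | h
  · exact h
  · exact absurd (not_both_up hp hA hB hne hiA hb (by omega) hbval) id

private lemma val_opp_of_lt (hp : p.IsValid) {A B : Finset ℕ} (hA : MinimalCI p A)
    (hB : MinimalCI p B) (hne : A ≠ B) {b : ℕ} (hb : b ∈ B)
    (hbval : p.valAt b < p.originVal) {i : ℕ} (hiA : i ∈ A) (hio : i ≠ p.origin) :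
    p.originVal < p.valAt i := by
  have hiN : i < p.vals.length := hA.1.1.2.1 i hiA
  have hvne : p.valAt i ≠ p.originVal := fun h => hio (valAt_inj' hp hiN hp.2.1 h)
  rcases Nat.lt_or_ge p.originVal (p.valAt i) with h | h
  · exact h
  · exact absurd (not_both_down hp hA hB hne hiA hb (by omega) hbval) id

private lemma exists_minimal_aux :
    ∀ n (I : Finset ℕ), I.card ≤ n → NonTrivialCI p I → ∃ M, MinimalCI p M := by
  intro n
  induction n with
  | zero =>
    intro I hc hI
    have h1 : p.origin ∈ I := hI.1.1
    have h2 : 0 < I.card := Finset.card_pos.mpr ⟨_, h1⟩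
    omega
  | succ n ih =>
    intro I hc hI
    by_cases h : ∀ J, NonTrivialCI p J → J ⊆ I → J = I
    · exact ⟨I, hI, h⟩
    · push_neg at h
      obtain ⟨J, hJ, hJI, hne⟩ := h
      have hlt : J.card < I.card :=
        Finset.card_lt_card (Finset.ssubset_iff_subset_ne.mpr ⟨hJI, hne⟩)
      exact ih J (by omega) hJ

end CPerm

/-- A centred permutation has either exactly one minimal
non-trivial centred interval, or exactly two; in the latter case the two
intervals are one-quadrant (besides the origin) and occupy opposite quadrants. -/
theorem minimal_nontrivial_centred_intervals (p : CPerm) (hp : p.IsValid)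
    (hlen : 1 ≤ p.len) :
    (∃! I : Finset ℕ, CPerm.MinimalCI p I) ∨
      (∃ I₁ I₂ : Finset ℕ, I₁ ≠ I₂ ∧ CPerm.MinimalCI p I₁ ∧ CPerm.MinimalCI p I₂ ∧
        (∀ J : Finset ℕ, CPerm.MinimalCI p J → J = I₁ ∨ J = I₂) ∧
        ∃ q₁ q₂ : ℕ, CPerm.OppositeQuadrants q₁ q₂ ∧
          (∀ i ∈ I₁, i ≠ p.origin → CPerm.InQuadrant p q₁ i) ∧
          (∀ i ∈ I₂, i ≠ p.origin → CPerm.InQuadrant p q₂ i)) := by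
  classical
  have hlenpos : 0 < p.vals.length := List.length_pos_iff.mpr hp.1
  have hN : 2 ≤ p.vals.length := by
    simp only [CPerm.len] at hlen; omega
  -- the full index set is a non-trivial centred interval
  have hrange : CPerm.NonTrivialCI p (Finset.range p.vals.length) := by
    refine ⟨⟨Finset.mem_range.mpr hp.2.1, fun i hi => Finset.mem_range.mp hi,
      ?_, ?_⟩, ?_⟩
    · intro i j k hi hk h1 h2
      have := Finset.mem_range.mp hk
      exact Finset.mem_range.mpr (by omega)
    · intro i k _ _ j hj _ _
      exact Finset.mem_range.mpr hj
    · by_cases h0 : p.origin = 0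
      · exact ⟨1, Finset.mem_range.mpr (by omega), by omega⟩
      · exact ⟨0, Finset.mem_range.mpr (by omega), by omega⟩
  obtain ⟨M, hM⟩ := CPerm.exists_minimal_aux (Finset.range p.vals.length).card _
    le_rfl hrange
  by_cases huniq : ∀ J, CPerm.MinimalCI p J → J = M
  · exact Or.inl ⟨M, hM, huniq⟩
  push_neg at huniq
  obtain ⟨I₂, hI₂, hne₂⟩ := huniq
  have hneMI : M ≠ I₂ := fun h => hne₂ h.symm
  right
  obtain ⟨j1, hj1, hj1o⟩ := hM.1.2
  obtain ⟨j2, hj2, hj2o⟩ := hI₂.1.2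
  refine ⟨M, I₂, hneMI, hM, hI₂, ?_, ?_⟩
  · -- at most two minimal intervals
    intro K hK
    by_contra hKn
    push_neg at hKn
    obtain ⟨hK1, hK2⟩ := hKn
    have hKM : K ≠ M := hK1
    have hKI : K ≠ I₂ := hK2
    obtain ⟨k, hkK, hko⟩ := hK.1.2
    rcases Nat.lt_or_ge k p.origin with hk | hk
    · have h1 : p.origin < j1 := CPerm.pos_opp_of_lt hM hK hKM.symm hkK hk hj1 hj1o
      have h2 : p.origin < j2 := CPerm.pos_opp_of_lt hI₂ hK hKI.symm hkK hk hj2 hj2o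
      exact CPerm.not_both_right hM hI₂ hneMI hj1 hj2 h1 h2
    · have hk' : p.origin < k := by omega
      have h1 : j1 < p.origin := CPerm.pos_opp_of_gt hM hK hKM.symm hkK hk' hj1 hj1o
      have h2 : j2 < p.origin := CPerm.pos_opp_of_gt hI₂ hK hKI.symm hkK hk' hj2 hj2o
      exact CPerm.not_both_left hM hI₂ hneMI hj1 hj2 h1 h2
  · -- the two intervals occupy opposite quadrants
    have hj2N : j2 < p.vals.length := hI₂.1.1.2.1 j2 hj2
    have hj2v : p.valAt j2 ≠ p.originVal :=
      fun h => hj2o (CPerm.valAt_inj' hp hj2N hp.2.1 h)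
    have hIneM : I₂ ≠ M := hne₂
    rcases Nat.lt_or_ge p.origin j2 with hpos2 | hpos2'
    · -- j2 to the right of the origin
      have hj1pos : j1 < p.origin := CPerm.pos_opp_of_gt hM hI₂ hneMI hj2 hpos2 hj1 hj1o
      rcases Nat.lt_or_ge p.originVal (p.valAt j2) with hval2 | hval2'
      · -- j2 in quadrant 1, so M in quadrant 3, I₂ in quadrant 1
        have hj1val : p.valAt j1 < p.originVal :=
          CPerm.val_opp_of_gt hp hM hI₂ hneMI hj2 hval2 hj1 hj1o
        refine ⟨3, 1, Or.inr (Or.inl ⟨rfl, rfl⟩), ?_, ?_⟩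
        · intro i hi hio
          exact ⟨hM.1.1.2.1 i hi, hio, Or.inr (Or.inr (Or.inl ⟨rfl,
            CPerm.pos_opp_of_gt hM hI₂ hneMI hj2 hpos2 hi hio,
            CPerm.val_opp_of_gt hp hM hI₂ hneMI hj2 hval2 hi hio⟩))⟩
        · intro i hi hio
          exact ⟨hI₂.1.1.2.1 i hi, hio, Or.inl ⟨rfl,
            CPerm.pos_opp_of_lt hI₂ hM hIneM hj1 hj1pos hi hio,
            CPerm.val_opp_of_lt hp hI₂ hM hIneM hj1 hj1val hi hio⟩⟩
      · -- j2 in quadrant 4, so M in quadrant 2, I₂ in quadrant 4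
        have hval2 : p.valAt j2 < p.originVal := by omega
        have hj1val : p.originVal < p.valAt j1 :=
          CPerm.val_opp_of_lt hp hM hI₂ hneMI hj2 hval2 hj1 hj1o
        refine ⟨2, 4, Or.inr (Or.inr (Or.inl ⟨rfl, rfl⟩)), ?_, ?_⟩
        · intro i hi hio
          exact ⟨hM.1.1.2.1 i hi, hio, Or.inr (Or.inl ⟨rfl,
            CPerm.pos_opp_of_gt hM hI₂ hneMI hj2 hpos2 hi hio,
            CPerm.val_opp_of_lt hp hM hI₂ hneMI hj2 hval2 hi hio⟩)⟩
        · intro i hi hio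
          exact ⟨hI₂.1.1.2.1 i hi, hio, Or.inr (Or.inr (Or.inr ⟨rfl,
            CPerm.pos_opp_of_lt hI₂ hM hIneM hj1 hj1pos hi hio,
            CPerm.val_opp_of_gt hp hI₂ hM hIneM hj1 hj1val hi hio⟩))⟩
    · -- j2 to the left of the origin
      have hpos2 : j2 < p.origin := by omega
      have hj1pos : p.origin < j1 := CPerm.pos_opp_of_lt hM hI₂ hneMI hj2 hpos2 hj1 hj1o
      rcases Nat.lt_or_ge p.originVal (p.valAt j2) with hval2 | hval2'
      · -- j2 in quadrant 2, so M in quadrant 4, I₂ in quadrant 2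
        have hj1val : p.valAt j1 < p.originVal :=
          CPerm.val_opp_of_gt hp hM hI₂ hneMI hj2 hval2 hj1 hj1o
        refine ⟨4, 2, Or.inr (Or.inr (Or.inr ⟨rfl, rfl⟩)), ?_, ?_⟩
        · intro i hi hio
          exact ⟨hM.1.1.2.1 i hi, hio, Or.inr (Or.inr (Or.inr ⟨rfl,
            CPerm.pos_opp_of_lt hM hI₂ hneMI hj2 hpos2 hi hio,
            CPerm.val_opp_of_gt hp hM hI₂ hneMI hj2 hval2 hi hio⟩))⟩
        · intro i hi hio
          exact ⟨hI₂.1.1.2.1 i hi, hio, Or.inr (Or.inl ⟨rfl,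
            CPerm.pos_opp_of_gt hI₂ hM hIneM hj1 hj1pos hi hio,
            CPerm.val_opp_of_lt hp hI₂ hM hIneM hj1 hj1val hi hio⟩)⟩
      · -- j2 in quadrant 3, so M in quadrant 1, I₂ in quadrant 3
        have hval2 : p.valAt j2 < p.originVal := by omega
        have hj1val : p.originVal < p.valAt j1 :=
          CPerm.val_opp_of_lt hp hM hI₂ hneMI hj2 hval2 hj1 hj1o
        refine ⟨1, 3, Or.inl ⟨rfl, rfl⟩, ?_, ?_⟩
        · intro i hi hio
          exact ⟨hM.1.1.2.1 i hi, hio, Or.inl ⟨rfl,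
            CPerm.pos_opp_of_lt hM hI₂ hneMI hj2 hpos2 hi hio,
            CPerm.val_opp_of_lt hp hM hI₂ hneMI hj2 hval2 hi hio⟩⟩
        · intro i hi hio
          exact ⟨hI₂.1.1.2.1 i hi, hio, Or.inr (Or.inr (Or.inl ⟨rfl,
            CPerm.pos_opp_of_gt hI₂ hM hIneM hj1 hj1pos hi hio,
            CPerm.val_opp_of_gt hp hI₂ hM hIneM hj1 hj1val hi hio⟩))⟩
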